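/- Let N ≥ 2, let f₁, …, f_{N−1} : ℝ^N → ℝ be C² functions, and let v : ℝ^N → ℝ^N be a C¹ vector field such that ⟨∇f_j(x), v(x)⟩ = 0 for every x ∈ ℝ^N and every j = 1, …, N−1, and such that the gradients ∇f₁(x), …, ∇f_{N−1}(x) are linearly independent for every x. Then every solution x : I → ℝ^N of ẋ = v(x) satisfies: (i) each f_j(x(t)) is constant on I, so the trajectory lies on the (N−1)-parametric family of orbits f_j = c_j; and (ii) for every t ∈ I, the vector ẍ(t) − ∇(½‖v‖²)(x(t)) lies in the linear span of ∇f₁(x(t)), …, ∇f_{N−1}(x(t)); i.e. the trajectories are generated by a force field of the form F = ∇(½‖v‖²) + Σ_{j=1}^{N−1} Λ_j ∇f_j for suitable multiplier functions Λ_j. -/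

import Mathlib

open Real Set

noncomputable section

/-- Partial derivative of a scalar function on `ℝ^n` in the `k`-th coordinate. -/
def pd (n : ℕ) (k : Fin n) (f : (Fin n → ℝ) → ℝ) (x : Fin n → ℝ) : ℝ :=
  fderiv ℝ f x (Pi.single k 1)

/-- Gradient on `ℝ^n`. -/
def grad (n : ℕ) (f : (Fin n → ℝ) → ℝ) (x : Fin n → ℝ) : Fin n → ℝ :=
  fun k => pd n k f x

/-- Euclidean inner product on `ℝ^n`. -/
def dot (n : ℕ) (a b : Fin n → ℝ) : ℝ := ∑ i, a i * b i

/-- Squared Euclidean norm on `ℝ^n`. -/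
def nsq (n : ℕ) (a : Fin n → ℝ) : ℝ := ∑ i, a i ^ 2

/-!
Along a solution of `ẋ = v(x)` the derivative of `f_j(x(t))` is `⟨∇f_j, v⟩ = 0`, which gives (i).
For (ii), `ẍ = Dv · v` while `∇(½‖v‖²) = (Dv)ᵀ v`, so their difference is `(Dv − (Dv)ᵀ) v`,
which is orthogonal to `v` since `Dv − (Dv)ᵀ` is antisymmetric. Where `v ≠ 0`, its orthogonal
complement is a hyperplane containing the `N − 1` independent gradients `∇f_j`, hence is
spanned by them; where `v = 0` the difference vanishes.
-/

open Matrix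

theorem dot_eq_dotProduct {n : ℕ} (a b : Fin n → ℝ) : dot n a b = a ⬝ᵥ b := rfl

theorem fderiv_apply_eq_dot_grad {n : ℕ} (f : (Fin n → ℝ) → ℝ) (p w : Fin n → ℝ) :
    fderiv ℝ f p w = dot n (grad n f p) w := by
  have hw : w = ∑ i, w i • Pi.single i 1 := by ext j; simp [Pi.single_apply]
  conv_lhs => rw [hw]
  simp [dot, grad, pd, mul_comm]

theorem IsOpen.is_const_comp_of_fderiv_apply_eq_zero {E : Type*} [NormedAddCommGroup E]
    [NormedSpace ℝ E] {g : E → ℝ} {v : E → E} (hg : Differentiable ℝ g)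
    (hgv : ∀ y, fderiv ℝ g y (v y) = 0) {s : Set ℝ} (hs : IsOpen s) (hs' : IsPreconnected s)
    {x : ℝ → E} (hx : ∀ t ∈ s, HasDerivAt x (v (x t)) t) {t u : ℝ} (ht : t ∈ s) (hu : u ∈ s) :
    g (x t) = g (x u) := by
  have hd : ∀ t ∈ s, HasDerivAt (g ∘ x) 0 t := fun t ht => by
    have h := (hg (x t)).hasFDerivAt.comp_hasDerivAt t (hx t ht)
    rwa [hgv] at h
  exact hs.is_const_of_deriv_eq_zero (f := g ∘ x) hs'
    (fun t ht => (hd t ht).differentiableAt.differentiableWithinAt) (fun t ht => (hd t ht).deriv)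
    ht hu

theorem LinearIndependent.span_range_eq_ker {K V ι : Type*} [Field K] [AddCommGroup V]
    [Module K V] [FiniteDimensional K V] [Fintype ι] {g : ι → V} (hg : LinearIndependent K g)
    {φ : Module.Dual K V} (hφ : φ ≠ 0) (hcard : Fintype.card ι + 1 = Module.finrank K V)
    (hgφ : ∀ j, φ (g j) = 0) :
    Submodule.span K (range g) = LinearMap.ker φ := by
  refine Submodule.eq_of_le_of_finrank_eq ?_ ?_
  · rw [Submodule.span_le]
    rintro _ ⟨j, rfl⟩
    exact hgφ j
  · have hker := φ.finrank_ker_add_one_of_ne_zero hφ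
    rw [finrank_span_eq_card hg]
    omega

theorem exists_sum_smul_eq_of_dot_eq_zero {n : ℕ} {g : Fin (n - 1) → Fin n → ℝ}
    (hg : LinearIndependent ℝ g) {v : Fin n → ℝ} (hv : v ≠ 0) (hgv : ∀ j, dot n (g j) v = 0)
    {d : Fin n → ℝ} (hd : dot n d v = 0) :
    ∃ Λ : Fin (n - 1) → ℝ, ∑ j, Λ j • g j = d := by
  set φ : Module.Dual ℝ (Fin n → ℝ) := (dotProductBilin ℝ ℝ).flip v
  have hφ : φ ≠ 0 := fun h => hv (dotProduct_self_eq_zero.1 (LinearMap.congr_fun h v))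
  have hn : n ≠ 0 := by
    rintro rfl
    exact hv (Subsingleton.elim _ _)
  have hcard : Fintype.card (Fin (n - 1)) + 1 = Module.finrank ℝ (Fin n → ℝ) := by
    simp only [Fintype.card_fin, Module.finrank_fin_fun]
    omega
  have hd' : d ∈ Submodule.span ℝ (range g) := by
    rw [hg.span_range_eq_ker hφ hcard hgv]
    exact hd
  exact (Submodule.mem_span_range_iff_exists_fun ℝ).1 hd'

section HalfNormSq

variable {n : ℕ} {v : (Fin n → ℝ) → (Fin n → ℝ)} {p : Fin n → ℝ}

theorem fderiv_half_nsq_comp (hv : DifferentiableAt ℝ v p) (w : Fin n → ℝ) :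
    fderiv ℝ (fun y => 1 / 2 * nsq n (v y)) p w = dot n (v p) (fderiv ℝ v p w) := by
  have hcoord := hasFDerivAt_pi'.1 hv.hasFDerivAt
  have hderiv := (HasFDerivAt.fun_sum (u := Finset.univ)
    fun i _ => (hcoord i).pow 2).const_mul (1 / 2 : ℝ)
  change fderiv ℝ (fun y => 1 / 2 * ∑ i, v y i ^ 2) p w = _
  rw [hderiv.fderiv]
  simp only [dot, _root_.smul_apply, _root_.sum_apply, ContinuousLinearMap.comp_apply,
    ContinuousLinearMap.proj_apply, smul_eq_mul, nsmul_eq_mul, Finset.mul_sum]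
  exact Finset.sum_congr rfl fun i _ => by ring

theorem dot_grad_half_nsq_comp (hv : DifferentiableAt ℝ v p) (w : Fin n → ℝ) :
    dot n (grad n (fun y => 1 / 2 * nsq n (v y)) p) w = dot n (v p) (fderiv ℝ v p w) := by
  rw [← fderiv_apply_eq_dot_grad, fderiv_half_nsq_comp hv]

theorem grad_half_nsq_comp_eq_zero (hv : DifferentiableAt ℝ v p) (hv0 : v p = 0) :
    grad n (fun y => 1 / 2 * nsq n (v y)) p = 0 :=
  dotProduct_self_eq_zero.1 <| by
    rw [← dot_eq_dotProduct, dot_grad_half_nsq_comp hv, hv0, dot_eq_dotProduct, zero_dotProduct]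

theorem dot_fderiv_apply_self_sub_grad_half_nsq_comp (hv : DifferentiableAt ℝ v p) :
    dot n (fderiv ℝ v p (v p) - grad n (fun y => 1 / 2 * nsq n (v y)) p) (v p) = 0 := by
  rw [dot_eq_dotProduct, sub_dotProduct, ← dot_eq_dotProduct (grad n _ p),
    dot_grad_half_nsq_comp hv, dot_eq_dotProduct, dotProduct_comm, sub_self]

theorem exists_grad_half_nsq_comp_add_sum_smul_eq (hv : DifferentiableAt ℝ v p)
    {g : Fin (n - 1) → Fin n → ℝ} (hg : LinearIndependent ℝ g)
    (hgv : ∀ j, dot n (g j) (v p) = 0) :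
    ∃ Λ : Fin (n - 1) → ℝ,
      grad n (fun y => 1 / 2 * nsq n (v y)) p + ∑ j, Λ j • g j = fderiv ℝ v p (v p) := by
  simp_rw [← eq_sub_iff_add_eq']
  by_cases hv0 : v p = 0
  · exact ⟨0, by rw [grad_half_nsq_comp_eq_zero hv hv0, hv0]; simp⟩
  · exact exists_sum_smul_eq_of_dot_eq_zero hg hv0 hgv
      (dot_fderiv_apply_self_sub_grad_half_nsq_comp hv)

end HalfNormSq

theorem generalized_dainelli_general
    (n : ℕ)
    (f : Fin (n - 1) → (Fin n → ℝ) → ℝ) (hf : ∀ j, ContDiff ℝ 2 (f j))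
    (v : (Fin n → ℝ) → (Fin n → ℝ)) (hv : ContDiff ℝ 1 v)
    (horth : ∀ x, ∀ j : Fin (n - 1), dot n (grad n (f j) x) (v x) = 0)
    (hindep : ∀ x, LinearIndependent ℝ (fun j : Fin (n - 1) => grad n (f j) x))
    (t₁ t₂ : ℝ) (x : ℝ → (Fin n → ℝ))
    (hx : ∀ t ∈ Ioo t₁ t₂, HasDerivAt x (v (x t)) t) :
    -- (i) the trajectory lies on the family of orbits f_j = c_j
    (∀ j : Fin (n - 1), ∀ t ∈ Ioo t₁ t₂, ∀ s ∈ Ioo t₁ t₂, f j (x t) = f j (x s)) ∧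
    -- (ii) the force is ∇(½‖v‖²) plus reactions along the gradients ∇f_j
    (∀ t ∈ Ioo t₁ t₂, ∃ Λ : Fin (n - 1) → ℝ,
      HasDerivAt (fun s => v (x s))
        (fun k => grad n (fun y => (1 / 2) * nsq n (v y)) (x t) k
          + ∑ j, Λ j * grad n (f j) (x t) k) t) := by
  refine ⟨fun j t ht s hs => ?_, fun t ht => ?_⟩
  · refine isOpen_Ioo.is_const_comp_of_fderiv_apply_eq_zero
      ((hf j).differentiable two_ne_zero) (fun y => ?_) isPreconnected_Ioo hx ht hs
    rw [fderiv_apply_eq_dot_grad, horth]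
  have hvx : DifferentiableAt ℝ v (x t) := (hv.differentiable one_ne_zero) (x t)
  obtain ⟨Λ, hΛ⟩ := exists_grad_half_nsq_comp_add_sum_smul_eq hvx (hindep (x t)) (horth (x t))
  refine ⟨Λ, (hvx.hasFDerivAt.comp_hasDerivAt t (hx t ht)).congr_deriv ?_⟩
  rw [← hΛ]
  ext k
  simp [Finset.sum_apply]

/-- Generalized Dainelli inverse problem: if `v` is annihilated by all `df_j` and the
gradients `∇f_j` are independent, then along solutions of `ẋ = v(x)` each `f_j` is
constant and the acceleration equals `∇(½‖v‖²)` plus a combination of the `∇f_j`. -/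
theorem generalized_dainelli
    (n : ℕ) (hn : 2 ≤ n)
    (f : Fin (n - 1) → (Fin n → ℝ) → ℝ) (hf : ∀ j, ContDiff ℝ 2 (f j))
    (v : (Fin n → ℝ) → (Fin n → ℝ)) (hv : ContDiff ℝ 1 v)
    (horth : ∀ x, ∀ j : Fin (n - 1), dot n (grad n (f j) x) (v x) = 0)
    (hindep : ∀ x, LinearIndependent ℝ (fun j : Fin (n - 1) => grad n (f j) x))
    (t₁ t₂ : ℝ) (x : ℝ → (Fin n → ℝ))
    (hx : ∀ t ∈ Ioo t₁ t₂, HasDerivAt x (v (x t)) t) :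
    -- (i) the trajectory lies on the family of orbits f_j = c_j
    (∀ j : Fin (n - 1), ∀ t ∈ Ioo t₁ t₂, ∀ s ∈ Ioo t₁ t₂, f j (x t) = f j (x s)) ∧
    -- (ii) the force is ∇(½‖v‖²) plus reactions along the gradients ∇f_j
    (∀ t ∈ Ioo t₁ t₂, ∃ Λ : Fin (n - 1) → ℝ,
      HasDerivAt (fun s => v (x s))
        (fun k => grad n (fun y => (1 / 2) * nsq n (v y)) (x t) k
          + ∑ j, Λ j * grad n (f j) (x t) k) t) :=
  generalized_dainelli_general n f hf v hv horth hindep t₁ t₂ x hx
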